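/- Under the same assumptions (Y centered, E‖Y‖² < ∞, ν∗μ_Y ≪ μ_Y, Poincaré inequality with constant U_Y), there exists a unique τ_Y ∈ H_{ν,0}(μ_Y) such that A(f, τ_Y) = E⟨Y, f(Y)⟩ for all f ∈ H_{ν,0}(μ_Y); and this τ_Y satisfies E∫‖τ_Y(Y+u) − τ_Y(Y)‖²ν(du) ≤ U_Y · E‖Y‖². -/

import Mathlib

/-!
Identify `H_ν(μY)` with the graph `{(f, f(· + u) - f)}` inside the Hilbert space
`L²(μY) × L²(ν ⊗ μY)`, whose norm is `hnuNorm`. The graph is closed because `ν ∗ μY ≪ μY` lets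
a.e. convergence pass through the shift `y ↦ y + u`; together with the mean-zero condition it is a
Hilbert space realising `H_{ν,0}(μY)`. There `A` is the inner product of the second coordinates, and
the Poincaré inequality bounds the first coordinate by it, so `A` is coercive and Lax–Milgram gives
a unique `τ_Y`. Testing with `f = τ_Y`:
`A(τ, τ) = E⟨Y, τ(Y)⟩ ≤ ‖Y‖₂ ‖τ(Y)‖₂ ≤ ‖Y‖₂ (U A(τ, τ))^{1/2}`, hence `A(τ, τ) ≤ U E‖Y‖²`.
-/

open MeasureTheory
open scoped RealInnerProductSpace

/-- Convolution of a (Lévy) measure `ν` with a probability measure `μ` on `ℝ^d`: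
`(ν ∗ μ)(B) = ∫∫ 1_B(u + y) ν(du) μ(dy)`. -/
noncomputable def convMeas {d : ℕ} (ν μ : Measure (EuclideanSpace ℝ (Fin d))) :
    Measure (EuclideanSpace ℝ (Fin d)) :=
  (ν.prod μ).map (fun p => p.1 + p.2)

/-- Membership in the space `H_ν(μY)`: Borel measurable `f : ℝ^d → ℝ^d` with
`∫‖f(y)‖² μY(dy) < ∞` and `∫∫‖f(y+u) - f(y)‖² ν(du) μY(dy) < ∞`. -/
def memHnu {d : ℕ} (ν μY : Measure (EuclideanSpace ℝ (Fin d)))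
    (f : EuclideanSpace ℝ (Fin d) → EuclideanSpace ℝ (Fin d)) : Prop :=
  Measurable f ∧ Integrable (fun y => ‖f y‖ ^ 2) μY ∧
    Integrable (fun p : EuclideanSpace ℝ (Fin d) × EuclideanSpace ℝ (Fin d) =>
      ‖f (p.2 + p.1) - f p.2‖ ^ 2) (ν.prod μY)

/-- The bilinear functional `A(f,g) = E ∫ ⟨f(Y+u) - f(Y), g(Y+u) - g(Y)⟩ ν(du)`. -/
noncomputable def bilinA {d : ℕ} (ν μY : Measure (EuclideanSpace ℝ (Fin d)))
    (f g : EuclideanSpace ℝ (Fin d) → EuclideanSpace ℝ (Fin d)) : ℝ :=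
  ∫ p : EuclideanSpace ℝ (Fin d) × EuclideanSpace ℝ (Fin d),
    (⟪f (p.2 + p.1) - f p.2, g (p.2 + p.1) - g p.2⟫ : ℝ) ∂(ν.prod μY)

/-- The norm of `H_ν(μY)` induced by the inner product
`⟨f,g⟩ = E⟨f(Y), g(Y)⟩ + A(f,g)`. -/
noncomputable def hnuNorm {d : ℕ} (ν μY : Measure (EuclideanSpace ℝ (Fin d)))
    (f : EuclideanSpace ℝ (Fin d) → EuclideanSpace ℝ (Fin d)) : ℝ :=
  Real.sqrt ((∫ y, ‖f y‖ ^ 2 ∂μY) + bilinA ν μY f f)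

open Filter Topology

namespace IsCoercive

variable {V : Type*} [NormedAddCommGroup V] [InnerProductSpace ℝ V] {B : V →L[ℝ] V →L[ℝ] ℝ}

theorem flip (hB : IsCoercive B) : IsCoercive B.flip := hB

variable [CompleteSpace V]

theorem existsUnique_forall_apply_eq (hB : IsCoercive B) (ℓ : V →L[ℝ] ℝ) :
    ∃! u, ∀ v, B v u = ℓ v := by
  set J := hB.flip.continuousLinearEquivOfBilin
  have key : ∀ u v, B v u = ⟪J u, v⟫ := fun u v =>
    (hB.flip.continuousLinearEquivOfBilin_apply u v).symm
  refine ⟨J.symm ((InnerProductSpace.toDual ℝ V).symm ℓ), fun v => ?_, fun u hu => ?_⟩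
  · rw [key, J.apply_symm_apply, InnerProductSpace.toDual_symm_apply]
  · refine J.injective (ext_inner_right ℝ fun v => ?_)
    rw [← key, hu, J.apply_symm_apply, InnerProductSpace.toDual_symm_apply]

end IsCoercive

theorem le_mul_sq_of_le_mul_of_sq_le_mul {a b c U : ℝ} (ha : 0 ≤ a) (hU : 0 ≤ U)
    (habc : a ≤ b * c) (hc : c ^ 2 ≤ U * a) : a ≤ U * b ^ 2 := by
  rcases ha.eq_or_lt with rfl | ha
  · positivity
  refine le_of_mul_le_mul_left ?_ ha
  calc a * a ≤ (b * c) ^ 2 := by rw [← sq]; exact pow_le_pow_left₀ ha.le habc 2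
    _ = b ^ 2 * c ^ 2 := by ring
    _ ≤ b ^ 2 * (U * a) := by gcongr
    _ = a * (U * b ^ 2) := by ring

namespace Submodule

variable {E F : Type*} [NormedAddCommGroup E] [InnerProductSpace ℝ E]
  [NormedAddCommGroup F] [InnerProductSpace ℝ F] (K : Submodule ℝ (WithLp 2 (E × F)))

noncomputable def sndInnerForm : K →L[ℝ] K →L[ℝ] ℝ :=
  (innerSL ℝ).bilinearComp (WithLp.sndL 2 ℝ E F ∘L K.subtypeL) (WithLp.sndL 2 ℝ E F ∘L K.subtypeL)

noncomputable def fstInnerFunctional (y : E) : K →L[ℝ] ℝ :=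
  innerSL ℝ y ∘L WithLp.fstL 2 ℝ E F ∘L K.subtypeL

variable {K}

@[simp]
theorem sndInnerForm_apply (v w : K) :
    K.sndInnerForm v w = ⟪(v : WithLp 2 (E × F)).snd, (w : WithLp 2 (E × F)).snd⟫ :=
  rfl

@[simp]
theorem fstInnerFunctional_apply (y : E) (v : K) :
    K.fstInnerFunctional y v = ⟪y, (v : WithLp 2 (E × F)).fst⟫ :=
  rfl

variable {U : ℝ}

theorem isCoercive_sndInnerForm (hU : 0 ≤ U) (hK : ∀ v ∈ K, ‖v.fst‖ ^ 2 ≤ U * ‖v.snd‖ ^ 2) :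
    IsCoercive K.sndInnerForm := by
  refine ⟨(U + 1)⁻¹, by positivity, fun v => ?_⟩
  have hv : ‖v‖ ^ 2 = ‖(v : WithLp 2 (E × F)).fst‖ ^ 2 + ‖(v : WithLp 2 (E × F)).snd‖ ^ 2 :=
    WithLp.prod_norm_sq_eq_of_L2 _
  rw [sndInnerForm_apply, real_inner_self_eq_norm_sq, mul_assoc, ← sq,
    inv_mul_le_iff₀ (by positivity)]
  linarith [hK v v.2]

theorem norm_snd_sq_le_of_sndInnerForm_self (hU : 0 ≤ U)
    (hK : ∀ v ∈ K, ‖v.fst‖ ^ 2 ≤ U * ‖v.snd‖ ^ 2) {y : E} {u : K}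
    (hu : K.sndInnerForm u u = K.fstInnerFunctional y u) :
    ‖(u : WithLp 2 (E × F)).snd‖ ^ 2 ≤ U * ‖y‖ ^ 2 := by
  rw [sndInnerForm_apply, fstInnerFunctional_apply, real_inner_self_eq_norm_sq] at hu
  exact le_mul_sq_of_le_mul_of_sq_le_mul (sq_nonneg _) hU
    (hu.trans_le (real_inner_le_norm _ _)) (hK u u.2)

end Submodule

namespace MeasureTheory

variable {α E : Type*} [MeasurableSpace α] {μ : Measure α}
  [NormedAddCommGroup E] [InnerProductSpace ℝ E]

theorem L2.inner_eq_integral_of_ae_eq {f g : Lp E 2 μ} {F G : α → E} (hF : f =ᵐ[μ] F)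
    (hG : g =ᵐ[μ] G) : ⟪f, g⟫ = ∫ x, ⟪F x, G x⟫ ∂μ := by
  rw [L2.inner_def]
  exact integral_congr_ae (by filter_upwards [hF, hG] with x hFx hGx; rw [hFx, hGx])

theorem L2.norm_sq_eq_integral_of_ae_eq {f : Lp E 2 μ} {F : α → E} (hF : f =ᵐ[μ] F) :
    ‖f‖ ^ 2 = ∫ x, ‖F x‖ ^ 2 ∂μ := by
  simp_rw [← real_inner_self_eq_norm_sq]
  exact L2.inner_eq_integral_of_ae_eq hF hF

variable [CompleteSpace E] (μ) [IsFiniteMeasure μ]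

noncomputable def Lp.meanZero : Submodule ℝ (Lp E 2 μ) where
  carrier := {f | ∫ x, f x ∂μ = 0}
  add_mem' {f g} hf hg := by
    simp only [Set.mem_ofPred_eq] at *
    rw [integral_congr_ae (Lp.coeFn_add f g), integral_add' ((Lp.memLp f).integrable one_le_two)
      ((Lp.memLp g).integrable one_le_two), hf, hg, add_zero]
  zero_mem' := by
    simp only [Set.mem_ofPred_eq]
    rw [integral_congr_ae (Lp.coeFn_zero E 2 μ)]
    exact integral_zero α E
  smul_mem' c f hf := by
    simp only [Set.mem_ofPred_eq] at *
    rw [integral_congr_ae (Lp.coeFn_smul c f)]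
    simp only [Pi.smul_apply]
    rw [integral_smul, hf, smul_zero]

variable {μ}

theorem Lp.inner_const_eq_inner_integral (c : E) (f : Lp E 2 μ) :
    ⟪Lp.const 2 μ c, f⟫ = ⟪c, ∫ x, f x ∂μ⟫ := by
  rw [L2.inner_eq_integral_of_ae_eq (Lp.coeFn_const 2 μ c) EventuallyEq.rfl]
  exact integral_inner (𝕜 := ℝ) ((Lp.memLp f).integrable one_le_two) c

theorem Lp.isClosed_meanZero : IsClosed (Lp.meanZero (E := E) μ : Set (Lp E 2 μ)) := by
  have : (Lp.meanZero (E := E) μ : Set (Lp E 2 μ)) = ⋂ c : E, {f | ⟪Lp.const 2 μ c, f⟫ = 0} := by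
    ext f
    simp only [Set.mem_iInter, Set.mem_ofPred_eq, Lp.inner_const_eq_inner_integral]
    exact ⟨fun hf c => by rw [show ∫ x, f x ∂μ = 0 from hf, inner_zero_right],
      fun h => inner_self_eq_zero.mp (h _)⟩
  rw [this]
  exact isClosed_iInter fun c => isClosed_eq (continuous_const.inner continuous_id) continuous_const

end MeasureTheory

section Graph

variable {d : ℕ} {ν μY : Measure (EuclideanSpace ℝ (Fin d))}

local notation "ℝᵈ" => EuclideanSpace ℝ (Fin d)

noncomputable def shiftDiff : (ℝᵈ → ℝᵈ) →ₗ[ℝ] ℝᵈ × ℝᵈ → ℝᵈ where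
  toFun f p := f (p.2 + p.1) - f p.2
  map_add' f g := by ext p : 1; simp only [Pi.add_apply]; abel
  map_smul' c f := by ext p : 1; simp only [Pi.smul_apply, RingHom.id_apply, smul_sub]

theorem shiftDiff_apply (f : ℝᵈ → ℝᵈ) (p : ℝᵈ × ℝᵈ) : shiftDiff f p = f (p.2 + p.1) - f p.2 :=
  rfl

theorem Measurable.shiftDiff {f : ℝᵈ → ℝᵈ} (hf : Measurable f) : Measurable (shiftDiff f) :=
  (hf.comp (measurable_snd.add measurable_fst)).sub (hf.comp measurable_snd)

theorem memHnu_iff_memLp {f : ℝᵈ → ℝᵈ} :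
    memHnu ν μY f ↔ Measurable f ∧ MemLp f 2 μY ∧ MemLp (shiftDiff f) 2 (ν.prod μY) := by
  refine and_congr_right fun hf => and_congr ?_ ?_
  · exact (memLp_two_iff_integrable_sq_norm hf.aestronglyMeasurable).symm
  · exact (memLp_two_iff_integrable_sq_norm hf.shiftDiff.aestronglyMeasurable).symm

theorem quasiMeasurePreserving_add_of_convMeas (habs : convMeas ν μY ≪ μY) :
    Measure.QuasiMeasurePreserving (fun p : ℝᵈ × ℝᵈ => p.2 + p.1) (ν.prod μY) μY := by
  refine ⟨measurable_snd.add measurable_fst, ?_⟩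
  simp_rw [add_comm _ (Prod.fst _)]
  exact habs

theorem shiftDiff_congr_ae (habs : convMeas ν μY ≪ μY) {f g : ℝᵈ → ℝᵈ} (h : f =ᵐ[μY] g) :
    shiftDiff f =ᵐ[ν.prod μY] shiftDiff g := by
  filter_upwards [(quasiMeasurePreserving_add_of_convMeas habs).ae h,
    Measure.quasiMeasurePreserving_snd.ae h] with p h_add h_snd
  rw [shiftDiff_apply, shiftDiff_apply, h_add, h_snd]

theorem ae_eq_shiftDiff_of_tendsto (habs : convMeas ν μY ≪ μY) {f : ℕ → Lp ℝᵈ 2 μY}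
    {g : ℕ → Lp ℝᵈ 2 (ν.prod μY)} {f₀ : Lp ℝᵈ 2 μY} {g₀ : Lp ℝᵈ 2 (ν.prod μY)}
    (hf : Tendsto f atTop (𝓝 f₀)) (hg : Tendsto g atTop (𝓝 g₀))
    (hfg : ∀ n, g n =ᵐ[ν.prod μY] shiftDiff (f n)) : g₀ =ᵐ[ν.prod μY] shiftDiff f₀ := by
  obtain ⟨ns, hns, hf_ae⟩ := (tendstoInMeasure_of_tendsto_Lp hf).exists_seq_tendsto_ae
  obtain ⟨ms, hms, hg_ae⟩ :=
    (tendstoInMeasure_of_tendsto_Lp (hg.comp hns.tendsto_atTop)).exists_seq_tendsto_ae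
  filter_upwards [(quasiMeasurePreserving_add_of_convMeas habs).ae hf_ae,
    Measure.quasiMeasurePreserving_snd.ae hf_ae, hg_ae, ae_all_iff.2 hfg]
    with p h_add h_snd h_g h_fg
  refine tendsto_nhds_unique h_g ?_
  simp only [Function.comp_apply, h_fg, shiftDiff_apply]
  exact (h_add.sub h_snd).comp hms.tendsto_atTop

variable (ν μY) in
abbrev GraphSpace := WithLp 2 (Lp ℝᵈ 2 μY × Lp ℝᵈ 2 (ν.prod μY))

theorem inner_snd_eq_bilinA {v w : GraphSpace ν μY} {f g : ℝᵈ → ℝᵈ}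
    (hv : v.snd =ᵐ[ν.prod μY] shiftDiff f) (hw : w.snd =ᵐ[ν.prod μY] shiftDiff g) :
    ⟪v.snd, w.snd⟫ = bilinA ν μY f g :=
  L2.inner_eq_integral_of_ae_eq hv hw

theorem norm_snd_sq_eq_bilinA {v : GraphSpace ν μY} {f : ℝᵈ → ℝᵈ}
    (hv : v.snd =ᵐ[ν.prod μY] shiftDiff f) : ‖v.snd‖ ^ 2 = bilinA ν μY f f := by
  rw [← real_inner_self_eq_norm_sq]
  exact inner_snd_eq_bilinA hv hv

variable (ν μY) in
def hnuGraph : Submodule ℝ (GraphSpace ν μY) where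
  carrier := {v | ∃ f, Measurable f ∧ v.fst =ᵐ[μY] f ∧ v.snd =ᵐ[ν.prod μY] shiftDiff f}
  zero_mem' := ⟨0, measurable_zero, Lp.coeFn_zero .., by
    rw [map_zero]; exact Lp.coeFn_zero ..⟩
  add_mem' := by
    rintro v w ⟨f, hf, hvf, hvf'⟩ ⟨g, hg, hwg, hwg'⟩
    refine ⟨f + g, hf.add hg, (Lp.coeFn_add _ _).trans (hvf.add hwg), ?_⟩
    rw [map_add]
    exact (Lp.coeFn_add _ _).trans (hvf'.add hwg')
  smul_mem' := by
    rintro c v ⟨f, hf, hvf, hvf'⟩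
    refine ⟨c • f, hf.const_smul c, (Lp.coeFn_smul _ _).trans (hvf.const_smul c), ?_⟩
    rw [map_smul]
    exact (Lp.coeFn_smul _ _).trans (hvf'.const_smul c)

theorem isClosed_hnuGraph (habs : convMeas ν μY ≪ μY) :
    IsClosed (hnuGraph ν μY : Set (GraphSpace ν μY)) := by
  refine IsSeqClosed.isClosed fun v w hv hw => ?_
  choose F hF hvF hvF' using hv
  have hw_snd : w.snd =ᵐ[ν.prod μY] shiftDiff w.fst :=
    ae_eq_shiftDiff_of_tendsto habs (((WithLp.fstL 2 ℝ _ _).continuous.tendsto w).comp hw)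
      (((WithLp.sndL 2 ℝ _ _).continuous.tendsto w).comp hw)
      fun n => (hvF' n).trans (shiftDiff_congr_ae habs (hvF n).symm)
  have hmeas := Lp.aestronglyMeasurable w.fst
  exact ⟨hmeas.mk _, hmeas.stronglyMeasurable_mk.measurable, hmeas.ae_eq_mk,
    hw_snd.trans (shiftDiff_congr_ae habs hmeas.ae_eq_mk)⟩

variable (ν μY) in
noncomputable def hnu0Graph [IsFiniteMeasure μY] : Submodule ℝ (GraphSpace ν μY) :=
  hnuGraph ν μY ⊓ (Lp.meanZero μY).comap (WithLp.fstₗ 2 ℝ (Lp ℝᵈ 2 μY) (Lp ℝᵈ 2 (ν.prod μY)))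

variable [IsFiniteMeasure μY]

theorem mem_hnu0Graph {v : GraphSpace ν μY} :
    v ∈ hnu0Graph ν μY ↔ v ∈ hnuGraph ν μY ∧ ∫ y, v.fst y ∂μY = 0 :=
  Iff.rfl

theorem isClosed_hnu0Graph (habs : convMeas ν μY ≪ μY) :
    IsClosed (hnu0Graph ν μY : Set (GraphSpace ν μY)) :=
  (isClosed_hnuGraph habs).inter (Lp.isClosed_meanZero.preimage (WithLp.fstL 2 ℝ _ _).continuous)

theorem exists_memHnu_of_mem_hnu0Graph {v : GraphSpace ν μY} (hv : v ∈ hnu0Graph ν μY) :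
    ∃ f, memHnu ν μY f ∧ ∫ y, f y ∂μY = 0 ∧ v.fst =ᵐ[μY] f ∧
      v.snd =ᵐ[ν.prod μY] shiftDiff f := by
  obtain ⟨⟨f, hf, hvf, hvf'⟩, hv0⟩ := mem_hnu0Graph.1 hv
  refine ⟨f, memHnu_iff_memLp.2 ⟨hf, (Lp.memLp _).ae_eq hvf, (Lp.memLp _).ae_eq hvf'⟩, ?_, hvf,
    hvf'⟩
  rw [← integral_congr_ae hvf]
  exact hv0

theorem exists_mem_hnu0Graph_of_memHnu {f : ℝᵈ → ℝᵈ} (hf : memHnu ν μY f)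
    (hf0 : ∫ y, f y ∂μY = 0) :
    ∃ v ∈ hnu0Graph ν μY, v.fst =ᵐ[μY] f ∧ v.snd =ᵐ[ν.prod μY] shiftDiff f := by
  obtain ⟨hf_meas, hf_L2, hDf_L2⟩ := memHnu_iff_memLp.1 hf
  refine ⟨WithLp.toLp 2 (hf_L2.toLp f, hDf_L2.toLp _), mem_hnu0Graph.2 ⟨⟨f, hf_meas,
    hf_L2.coeFn_toLp, hDf_L2.coeFn_toLp⟩, ?_⟩, hf_L2.coeFn_toLp, hDf_L2.coeFn_toLp⟩
  rw [← hf0]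
  exact integral_congr_ae hf_L2.coeFn_toLp

theorem norm_fst_sq_le_of_poincare {U : ℝ}
    (hPoin : ∀ f, memHnu ν μY f → ∫ y, ‖f y - ∫ z, f z ∂μY‖ ^ 2 ∂μY ≤ U * bilinA ν μY f f) :
    ∀ v ∈ hnu0Graph ν μY, ‖v.fst‖ ^ 2 ≤ U * ‖v.snd‖ ^ 2 := by
  intro v hv
  obtain ⟨f, hf, hf0, hvf, hvf'⟩ := exists_memHnu_of_mem_hnu0Graph hv
  simpa only [L2.norm_sq_eq_integral_of_ae_eq hvf, norm_snd_sq_eq_bilinA hvf', hf0, sub_zero]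
    using hPoin f hf

theorem forall_sndInnerForm_eq_iff {y : Lp ℝᵈ 2 μY} (hy : y =ᵐ[μY] id) {u : hnu0Graph ν μY}
    {τ : ℝᵈ → ℝᵈ} (hu : (u : GraphSpace ν μY).snd =ᵐ[ν.prod μY] shiftDiff τ) :
    (∀ v, (hnu0Graph ν μY).sndInnerForm v u = (hnu0Graph ν μY).fstInnerFunctional y v) ↔
      ∀ f, memHnu ν μY f → ∫ y, f y ∂μY = 0 → bilinA ν μY f τ = ∫ y, ⟪y, f y⟫ ∂μY := by
  constructor
  · intro h f hf hf0
    obtain ⟨v, hv, hvf, hvf'⟩ := exists_mem_hnu0Graph_of_memHnu hf hf0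
    have := h ⟨v, hv⟩
    rwa [Submodule.sndInnerForm_apply, Submodule.fstInnerFunctional_apply,
      inner_snd_eq_bilinA hvf' hu, L2.inner_eq_integral_of_ae_eq hy hvf] at this
  · intro h v
    obtain ⟨f, hf, hf0, hvf, hvf'⟩ := exists_memHnu_of_mem_hnu0Graph v.2
    rw [Submodule.sndInnerForm_apply, Submodule.fstInnerFunctional_apply,
      inner_snd_eq_bilinA hvf' hu, L2.inner_eq_integral_of_ae_eq hy hvf]
    exact h f hf hf0

end Graph

theorem laxMilgram_steinKernel_general (d : ℕ) (ν μY : Measure (EuclideanSpace ℝ (Fin d)))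
    (hprobY : IsProbabilityMeasure μY)
    (hmom2Y : Integrable (fun y => ‖y‖ ^ 2) μY)
    (habs : convMeas ν μY ≪ μY)
    (U : ℝ) (hU : 0 < U)
    (hPoin : ∀ f, memHnu ν μY f →
      ∫ y, ‖f y - ∫ z, f z ∂μY‖ ^ 2 ∂μY ≤ U * bilinA ν μY f f) :
    ∃ τ : EuclideanSpace ℝ (Fin d) → EuclideanSpace ℝ (Fin d),
      (memHnu ν μY τ ∧ ∫ y, τ y ∂μY = 0 ∧
        (∀ f, memHnu ν μY f → ∫ y, f y ∂μY = 0 →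
          bilinA ν μY f τ = ∫ y, (⟪y, f y⟫ : ℝ) ∂μY) ∧
        bilinA ν μY τ τ ≤ U * ∫ y, ‖y‖ ^ 2 ∂μY) ∧
      ∀ τ' : EuclideanSpace ℝ (Fin d) → EuclideanSpace ℝ (Fin d),
        memHnu ν μY τ' → ∫ y, τ' y ∂μY = 0 →
        (∀ f, memHnu ν μY f → ∫ y, f y ∂μY = 0 →
          bilinA ν μY f τ' = ∫ y, (⟪y, f y⟫ : ℝ) ∂μY) →
        τ' =ᵐ[μY] τ := by
  have : CompleteSpace (hnu0Graph ν μY) := (isClosed_hnu0Graph habs).completeSpace_coe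
  have hK := norm_fst_sq_le_of_poincare hPoin
  have hY : MemLp id 2 μY := (memLp_two_iff_integrable_sq_norm aestronglyMeasurable_id).2 hmom2Y
  have hB := Submodule.isCoercive_sndInnerForm hU.le hK
  obtain ⟨u, hu, hu_unique⟩ :=
    hB.existsUnique_forall_apply_eq ((hnu0Graph ν μY).fstInnerFunctional (hY.toLp id))
  obtain ⟨τ, hτ, hτ0, hu_fst, hu_snd⟩ := exists_memHnu_of_mem_hnu0Graph u.2
  refine ⟨τ, ⟨hτ, hτ0, (forall_sndInnerForm_eq_iff hY.coeFn_toLp hu_snd).1 hu, ?_⟩,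
    fun τ' hτ' hτ'0 hτ'_rep => ?_⟩
  · have hY_norm : ‖hY.toLp id‖ ^ 2 = ∫ y, ‖y‖ ^ 2 ∂μY :=
      L2.norm_sq_eq_integral_of_ae_eq hY.coeFn_toLp
    rw [← hY_norm, ← norm_snd_sq_eq_bilinA hu_snd]
    exact Submodule.norm_snd_sq_le_of_sndInnerForm_self hU.le hK (hu u)
  · obtain ⟨v, hv, hv_fst, hv_snd⟩ := exists_mem_hnu0Graph_of_memHnu hτ' hτ'0
    have huv : u = ⟨v, hv⟩ :=
      (hu_unique ⟨v, hv⟩ ((forall_sndInnerForm_eq_iff hY.coeFn_toLp hv_snd).2 hτ'_rep)).symm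
    rw [huv] at hu_fst
    exact hv_fst.symm.trans hu_fst

/-- Under the same assumptions (Y centered, `E‖Y‖² < ∞`, `ν ∗ μY ≪ μY`, Poincaré
inequality with constant `U_Y`), there exists a `μY`-a.e. unique `τ_Y ∈ H_{ν,0}(μY)` such that
`A(f, τ_Y) = E⟨Y, f(Y)⟩` for all `f ∈ H_{ν,0}(μY)`, and it satisfies the energy bound
`E∫‖τ_Y(Y+u) - τ_Y(Y)‖² ν(du) ≤ U_Y E‖Y‖²`. -/
theorem laxMilgram_steinKernel (d : ℕ) (ν μY : Measure (EuclideanSpace ℝ (Fin d)))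
    (hprobY : IsProbabilityMeasure μY)
    (hcentY : ∫ y, y ∂μY = 0)
    (hmom2Y : Integrable (fun y => ‖y‖ ^ 2) μY)
    (hsf : SigmaFinite ν)
    (hzero : ν {0} = 0)
    (hlevy : ∫⁻ u, ENNReal.ofReal (min 1 (‖u‖ ^ 2)) ∂ν < ⊤)
    (hbig : IntegrableOn (fun u => ‖u‖ ^ 2) {u : EuclideanSpace ℝ (Fin d) | 1 ≤ ‖u‖} ν)
    (habs : convMeas ν μY ≪ μY)
    (U : ℝ) (hU : 0 < U)
    (hPoin : ∀ f, memHnu ν μY f →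
      ∫ y, ‖f y - ∫ z, f z ∂μY‖ ^ 2 ∂μY ≤ U * bilinA ν μY f f) :
    ∃ τ : EuclideanSpace ℝ (Fin d) → EuclideanSpace ℝ (Fin d),
      (memHnu ν μY τ ∧ ∫ y, τ y ∂μY = 0 ∧
        (∀ f, memHnu ν μY f → ∫ y, f y ∂μY = 0 →
          bilinA ν μY f τ = ∫ y, (⟪y, f y⟫ : ℝ) ∂μY) ∧
        bilinA ν μY τ τ ≤ U * ∫ y, ‖y‖ ^ 2 ∂μY) ∧
      ∀ τ' : EuclideanSpace ℝ (Fin d) → EuclideanSpace ℝ (Fin d),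
        memHnu ν μY τ' → ∫ y, τ' y ∂μY = 0 →
        (∀ f, memHnu ν μY f → ∫ y, f y ∂μY = 0 →
          bilinA ν μY f τ' = ∫ y, (⟪y, f y⟫ : ℝ) ∂μY) →
        τ' =ᵐ[μY] τ :=
  laxMilgram_steinKernel_general d ν μY hprobY hmom2Y habs U hU hPoin
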